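/- arXiv:0903.5004 — 7 statements merged into one kernel-verified Lean document; each statement's English description precedes it below -/
import Mathlib

section
/- The algebras d₃ (with relations x² = 0, xθ = x, θx = 0, θ² = θ) and d₄ (with relations x² = 0, xθ = 0, θx = x, θ² = θ) on ℂ² are opposite algebras of each other, and they are not isomorphic as algebras. -/
/-- The underlying 2-dimensional complex vector space, with coordinates in the
basis `x = (1,0)`, `θ = (0,1)`. -/
abbrev V : Type := ℂ × ℂ

/-- A multiplication `V → V → V` is bilinear. -/
def IsBilin (m : V → V → V) : Prop :=
  (∀ a b c : V, m (a + b) c = m a c + m b c) ∧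
  (∀ (s : ℂ) (a b : V), m (s • a) b = s • m a b) ∧
  (∀ a b c : V, m a (b + c) = m a b + m a c) ∧
  (∀ (s : ℂ) (a b : V), m a (s • b) = s • m a b)

/-- Associativity of a multiplication. -/
def IsAssoc (m : V → V → V) : Prop :=
  ∀ a b c : V, m (m a b) c = m a (m b c)

/-- Two multiplications on `V` are isomorphic algebra structures. -/
def AlgIso (m m' : V → V → V) : Prop :=
  ∃ g : V ≃ₗ[ℂ] V, ∀ a b : V, m' a b = g.symm (m (g a) (g b))

/-- `d₁`: `x² = x`, `θ² = θ`, `xθ = θx = 0`. -/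
def mul1 (a b : V) : V := (a.1 * b.1, a.2 * b.2)
/-- `d₂`: `θ² = θ`, other products `0`. -/
def mul2 (a b : V) : V := (0, a.2 * b.2)
/-- `d₃`: `xθ = x`, `θ² = θ`, other products `0`. -/
def mul3 (a b : V) : V := (a.1 * b.2, a.2 * b.2)
/-- `d₄`: `θx = x`, `θ² = θ`, other products `0`. -/
def mul4 (a b : V) : V := (a.2 * b.1, a.2 * b.2)
/-- `d₅`: `xθ = θx = x`, `θ² = θ`, `x² = 0`. -/
def mul5 (a b : V) : V := (a.1 * b.2 + a.2 * b.1, a.2 * b.2)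
/-- `d₆`: `θ² = x`, other products `0`. -/
def mul6 (a b : V) : V := (a.2 * b.2, 0)

/-! A right identity is transported by any algebra isomorphism. In `d₃` the element `θ` is a
right identity, while in `d₄` the element `x` annihilates everything from the left, so `d₄` has
no right identity. -/

def IsRightIdentity (m : V → V → V) (e : V) : Prop :=
  ∀ a : V, m a e = a

theorem AlgIso.exists_isRightIdentity {m m' : V → V → V} (h : AlgIso m m')
    (he : ∃ e, IsRightIdentity m e) : ∃ e, IsRightIdentity m' e := by
  obtain ⟨g, hg⟩ := h
  obtain ⟨e, he⟩ := he
  exact ⟨g.symm e, fun a => by rw [hg, g.apply_symm_apply, he, g.symm_apply_apply]⟩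

theorem isRightIdentity_mul3 : IsRightIdentity mul3 (0, 1) := fun a => by
  simp [mul3]

theorem not_exists_isRightIdentity_mul4 : ¬ ∃ e, IsRightIdentity mul4 e := by
  rintro ⟨e, he⟩
  have hx : mul4 (1, 0) e = (1, 0) := he (1, 0)
  simp [mul4] at hx

theorem mul4_eq_mul3_swap (a b : V) : mul4 a b = mul3 b a := by
  simp only [mul3, mul4, mul_comm]

/-- The algebras `d₃` and `d₄` are opposite algebras of each other, and they are
not isomorphic. -/
theorem stmt5 :
    (∀ a b : V, mul4 a b = mul3 b a) ∧ ¬ AlgIso mul3 mul4 :=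
  ⟨mul4_eq_mul3_swap, fun h =>
    not_exists_isRightIdentity_mul4 (h.exists_isRightIdentity ⟨_, isRightIdentity_mul3⟩)⟩
end

section
/- For the algebra A on ℂ² = span{x, θ} with x² = xθ = θx = 0, θ² = θ, the second Hochschild cohomology H²(A, A) is 1-dimensional over ℂ. -/
/-- Hochschild 2-cocycle condition for a bilinear map `φ` with respect to the
multiplication `mul`. -/
def IsCocycle2 (mul φ : V → V → V) : Prop :=
  ∀ a b c : V, mul a (φ b c) - φ (mul a b) c + φ a (mul b c) - mul (φ a b) c = 0

/-- Hochschild 2-coboundary condition. -/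
def IsCoboundary2 (mul φ : V → V → V) : Prop :=
  ∃ l : V →ₗ[ℂ] V, ∀ a b : V, φ a b = mul a (l b) - l (mul a b) + mul (l a) b

/-!
A bilinear map `ψ` is fixed by its four values on the basis `x, θ`. For the product of `d₂`,
where only `θ² = θ` is nonzero, the cocycle identity on basis triples forces
`ψ(x,x) = p x` and `ψ(x,θ) = ψ(θ,x) = q θ`; with `ψ(θ,θ) = s₁ x + s₂ θ` this leaves the
four parameters `p, q, s₁, s₂`. The last three are matched by the coboundary of the linear map
`x ↦ q θ`, `θ ↦ -s₁ x + s₂ θ`. Every coboundary vanishes at `(x, x)`, since `x` is annihilated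
by `A` and `x² = 0`, so `p` is the class in `H²`, represented by `x² ↦ x`.
-/

abbrev ex : V := (1, 0)

abbrev eθ : V := (0, 1)

/-- `mul1 - mul2`: the first-order direction of the deformation `x² = t x` of `d₂` into `d₁`. -/
def xSq (a b : V) : V := (a.1 * b.1, 0)

lemma isBilin_xSq : IsBilin xSq := by
  refine ⟨?_, ?_, ?_, ?_⟩ <;> intros <;> ext <;> simp [xSq] <;> ring

lemma isCocycle2_mul2_xSq : IsCocycle2 mul2 xSq := by
  intro a b c
  simp [mul2, xSq]

lemma IsCoboundary2.mul2_apply_ex_ex {φ : V → V → V} (h : IsCoboundary2 mul2 φ) :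
    φ ex ex = 0 := by
  obtain ⟨l, hl⟩ := h
  simp [hl, mul2, Prod.mk_zero_zero]

section Bilinear

variable {ψ : V → V → V}

lemma IsBilin.zero_left (h : IsBilin ψ) (b : V) : ψ 0 b = 0 := by
  simpa using h.2.1 0 0 b

lemma IsBilin.zero_right (h : IsBilin ψ) (a : V) : ψ a 0 = 0 := by
  simpa using h.2.2.2 0 a 0

lemma IsBilin.eq_basis_expansion (h : IsBilin ψ) (a b : V) :
    ψ a b = a.1 • (b.1 • ψ ex ex + b.2 • ψ ex eθ) + a.2 • (b.1 • ψ eθ ex + b.2 • ψ eθ eθ) := by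
  obtain ⟨add_left, smul_left, add_right, smul_right⟩ := h
  have basis_sum (v : V) : v = v.1 • ex + v.2 • eθ := by simp
  conv_lhs => rw [basis_sum a, basis_sum b]
  rw [add_left, smul_left, smul_left, add_right, add_right, smul_right, smul_right, smul_right,
    smul_right]

lemma IsCocycle2.mul2_basis_constraints (hψ : IsBilin ψ) (hc : IsCocycle2 mul2 ψ) :
    (ψ ex ex).2 = 0 ∧ (ψ ex eθ).1 = 0 ∧ (ψ eθ ex).1 = 0 ∧ (ψ ex eθ).2 = (ψ eθ ex).2 := by
  have mul2_ex_left (v : V) : mul2 ex v = 0 := by simp [mul2]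
  have mul2_ex_right (v : V) : mul2 v ex = 0 := by simp [mul2]
  have mul2_eθ_eθ : mul2 eθ eθ = eθ := by simp [mul2]
  refine ⟨?_, ?_, ?_, ?_⟩
  · have h := hc ex ex eθ
    simp only [mul2_ex_left, hψ.zero_left, hψ.zero_right] at h
    simpa [mul2] using congrArg Prod.snd h
  · have h := hc ex eθ eθ
    simp only [mul2_ex_left, mul2_eθ_eθ, hψ.zero_left] at h
    simpa [mul2] using congrArg Prod.fst h
  · have h := hc eθ eθ ex
    simp only [mul2_ex_right, mul2_eθ_eθ, hψ.zero_right] at h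
    simpa [mul2] using congrArg Prod.fst h
  · have h := hc eθ ex eθ
    simp only [mul2_ex_left, mul2_ex_right, hψ.zero_left, hψ.zero_right] at h
    simpa [mul2, sub_eq_zero] using congrArg Prod.snd h

lemma IsCocycle2.mul2_isCoboundary2_sub_xSq (hψ : IsBilin ψ) (hc : IsCocycle2 mul2 ψ) :
    IsCoboundary2 mul2 (fun a b => ψ a b - (ψ ex ex).1 • xSq a b) := by
  obtain ⟨hP₂, hQ₁, hR₁, hQR⟩ := hc.mul2_basis_constraints hψ
  let l : V →ₗ[ℂ] V :=
    { toFun := fun v => (-(ψ eθ eθ).1 * v.2, (ψ ex eθ).2 * v.1 + (ψ eθ eθ).2 * v.2)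
      map_add' := by intros; simp only [Prod.fst_add, Prod.snd_add, Prod.mk_add_mk]; ring_nf
      map_smul' := by intros; simp only [Prod.smul_fst, Prod.smul_snd, smul_eq_mul,
        RingHom.id_apply, Prod.smul_mk]; ring_nf }
  refine ⟨l, fun a b => ?_⟩
  show ψ a b - _ = _
  rw [hψ.eq_basis_expansion a b]
  ext <;> simp [l, mul2, xSq, hP₂, hQ₁, hR₁, ← hQR] <;> ring

end Bilinear

/-- For the algebra `d₂` (`x² = xθ = θx = 0`, `θ² = θ`), the second Hochschild
cohomology `H²(A,A)` is 1-dimensional over `ℂ`. -/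
theorem stmt8 :
    ∃ φ : V → V → V, IsBilin φ ∧ IsCocycle2 mul2 φ ∧ ¬ IsCoboundary2 mul2 φ ∧
      ∀ ψ : V → V → V, IsBilin ψ → IsCocycle2 mul2 ψ →
        ∃ c : ℂ, IsCoboundary2 mul2 (fun a b => ψ a b - c • φ a b) := by
  refine ⟨xSq, isBilin_xSq, isCocycle2_mul2_xSq, fun h => ?_,
    fun ψ hψ hc => ⟨_, hc.mul2_isCoboundary2_sub_xSq hψ⟩⟩
  simpa [xSq] using h.mul2_apply_ex_ex
end

section
/- For the algebra A on ℂ² = span{x, θ} with x² = 0, xθ = x, θx = 0, θ² = θ, every Hochschild n-cocycle (n ≥ 1) with coefficients in A is a coboundary; in particular H¹(A,A) = H²(A,A) = 0, so A is rigid. -/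
open Finset in
/-- The sequence obtained from `a : Fin (n+1) → V` by multiplying the entries
in positions `i` and `i+1`. -/
noncomputable def mergeAt (mul : V → V → V) {n : ℕ} (a : Fin (n + 1) → V) (i : Fin n) :
    Fin n → V := fun j =>
  if (j : ℕ) < (i : ℕ) then a (Fin.castSucc j)
  else if (j : ℕ) = (i : ℕ) then mul (a (Fin.castSucc j)) (a j.succ)
  else a j.succ

open Finset in
/-- The Hochschild coboundary of an `n`-cochain (as a raw function). -/
noncomputable def hD (mul : V → V → V) (n : ℕ) (f : (Fin n → V) → V) :
    (Fin (n + 1) → V) → V := fun a =>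
  mul (a 0) (f fun j => a j.succ)
    + ∑ i : Fin n, ((-1 : ℂ) ^ ((i : ℕ) + 1)) • f (mergeAt mul a i)
    + ((-1 : ℂ) ^ (n + 1)) • mul (f fun j => a (Fin.castSucc j)) (a (Fin.last n))

/-- Hochschild `n`-cochains: multilinear maps `Vⁿ → V`. -/
abbrev Cochain (n : ℕ) := MultilinearMap ℂ (fun _ : Fin n => V) V

/-- An `n`-cochain is a Hochschild cocycle. -/
def IsCocycle (mul : V → V → V) {n : ℕ} (φ : Cochain n) : Prop :=
  ∀ a : Fin (n + 1) → V, hD mul n (⇑φ) a = 0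

/-- A function `Vⁿ⁺¹ → V` is a Hochschild coboundary. -/
def IsCoboundary (mul : V → V → V) (n : ℕ) (f : (Fin (n + 1) → V) → V) : Prop :=
  ∃ ψ : Cochain n, hD mul n (⇑ψ) = f

/-!
Since `a * b = b.2 • a`, right multiplication only sees the `θ`-coordinate, and the coboundary
becomes a signed sum of deletions. Writing `P_x`, `P_θ` for the two coordinate projections,
the cochain `ψ(c₀, c') = P_θ φ(θ, c₀, c') - P_x φ(c₀, θ, c')` satisfies the homotopy identity
`Dψ(u, t) = φ(u, t) - P_θ (Dφ)(θ, u, t) + P_x (Dφ)(u, θ, t)`, and in degree one the constant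
`φ(x)₁ θ - φ(θ)₁ x` satisfies `Dψ(u) = φ(u) - P_θ (Dφ)(θ, u)`. Hence every cocycle is the
coboundary of its contraction.
-/

theorem Fin.removeNth_succ_cons {α : Type*} {n : ℕ} (x : α) (p : Fin (n + 1) → α)
    (i : Fin (n + 1)) :
    i.succ.removeNth (Fin.cons x p : Fin (n + 2) → α) = Fin.cons x (i.removeNth p) :=
  Fin.cons_comp_succ_succAbove x p i

section Mul3Coboundary

variable {k : ℕ}

theorem mul3_eq_smul (a b : V) : mul3 a b = b.2 • a := by
  ext <;> simp [mul3, mul_comm]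

theorem mergeAt_mul3 (a : Fin (k + 1) → V) (i : Fin k) :
    mergeAt mul3 a i =
      Function.update (i.succ.removeNth a) i ((a i.succ).2 • a i.castSucc) := by
  funext j
  rcases lt_trichotomy j i with h | rfl | h
  · rw [Function.update_of_ne h.ne, Fin.removeNth_apply,
      Fin.succAbove_of_castSucc_lt _ _ (by simp [Fin.lt_def]; omega)]
    simp [mergeAt, h]
  · simp [mergeAt, mul3_eq_smul]
  · rw [Function.update_of_ne h.ne', Fin.removeNth_apply,
      Fin.succAbove_of_le_castSucc _ _ (by simp [Fin.le_def]; omega)]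
    simp [mergeAt, not_lt.2 h.le, Fin.val_ne_of_ne h.ne']

theorem map_mergeAt_mul3 (ψ : Cochain k) (a : Fin (k + 1) → V) (i : Fin k) :
    ψ (mergeAt mul3 a i) = (a i.succ).2 • ψ (i.succ.removeNth a) := by
  have h : i.succ.removeNth a i = a i.castSucc := by
    rw [Fin.removeNth_apply, Fin.succAbove_of_castSucc_lt _ _ i.castSucc_lt_succ]
  rw [mergeAt_mul3, ← h, ψ.map_update_smul, Function.update_eq_self]

/-- The merge at the last position cancels against the final term of the coboundary. -/
theorem hD_mul3_succ_cons (ψ : Cochain (k + 1)) (u : V) (t : Fin (k + 1) → V) :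
    hD mul3 (k + 1) ψ (Fin.cons u t) = (ψ t).2 • u +
      ∑ j : Fin k, (-1 : ℂ) ^ ((j : ℕ) + 1) •
        (t j.castSucc).2 • ψ (Fin.cons u (j.castSucc.removeNth t)) := by
  simp only [hD, Fin.sum_univ_castSucc, map_mergeAt_mul3, mul3_eq_smul]
  simp only [Fin.cons_succ, Fin.cons_zero, Fin.val_castSucc, pow_succ, mul_neg, mul_one,
    Fin.removeNth_succ_cons, neg_smul, Finset.sum_neg_distrib, Fin.val_last, Fin.succ_last,
    Fin.cons_last, Fin.removeNth_last, neg_neg, ← Fin.init_def]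
  abel

end Mul3Coboundary

namespace Mul3

def x : V := (1, 0)

def θ : V := (0, 1)

theorem θ_snd : θ.2 = 1 := rfl

theorem fst_smul_x_add_snd_smul_θ (v : V) : v.1 • x + v.2 • θ = v := by
  ext <;> simp [x, θ]

def projX : V →ₗ[ℂ] V := LinearMap.inl ℂ ℂ ℂ ∘ₗ LinearMap.fst ℂ ℂ ℂ

def projθ : V →ₗ[ℂ] V := LinearMap.inr ℂ ℂ ℂ ∘ₗ LinearMap.snd ℂ ℂ ℂ

theorem projθ_apply (v : V) : projθ v = v.2 • θ := by
  ext <;> simp [projθ, θ]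

theorem projX_add_snd_smul_θ (v : V) : projX v + v.2 • θ = v := by
  ext <;> simp [projX, θ]

section DegreeOne

theorem map_vecCons_fin_one (φ : Cochain 1) (u : V) :
    φ ![u] = u.1 • φ ![x] + u.2 • φ ![θ] := by
  conv_lhs => rw [← fst_smul_x_add_snd_smul_θ u]
  exact (φ.cons_add _ _ _).trans (by rw [φ.cons_smul, φ.cons_smul]; rfl)

def contraction₀ (φ : Cochain 1) : Cochain 0 :=
  MultilinearMap.constOfIsEmpty ℂ _ ((φ ![x]).1 • θ - (φ ![θ]).1 • x)

theorem hD_contraction₀ (φ : Cochain 1) (u : V) :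
    hD mul3 0 (contraction₀ φ) ![u] = φ ![u] - projθ (hD mul3 1 φ (Fin.cons θ ![u])) := by
  rw [hD_mul3_succ_cons]
  ext <;> simp [hD, contraction₀, mul3_eq_smul, projθ_apply, map_vecCons_fin_one φ u, x, θ] <;>
    ring

theorem isCoboundary_of_isCocycle_one (φ : Cochain 1) (hφ : IsCocycle mul3 φ) :
    IsCoboundary mul3 0 φ :=
  ⟨contraction₀ φ, funext fun a => by
    have ha : a = ![a 0] := by funext i; fin_cases i; rfl
    rw [ha, hD_contraction₀, hφ, map_zero, sub_zero]⟩

end DegreeOne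

section HigherDegree

variable {m : ℕ}

def contraction (φ : Cochain (m + 2)) : Cochain (m + 1) :=
  projθ.compMultilinearMap (φ.curryLeft θ) - projX.compMultilinearMap (φ.curryMid 1 θ)

theorem contraction_apply (φ : Cochain (m + 2)) (c : Fin (m + 1) → V) :
    contraction φ c = projθ (φ (Fin.cons θ c)) - projX (φ (Fin.insertNth 1 θ c)) := rfl

theorem contraction_apply_snd (φ : Cochain (m + 2)) (c : Fin (m + 1) → V) :
    (contraction φ c).2 = (φ (Fin.cons θ c)).2 := by
  simp [contraction_apply, projθ, projX]

theorem contraction_cons (φ : Cochain (m + 2)) (u : V) (s : Fin m → V) :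
    contraction φ (Fin.cons u s) =
      projθ (φ (Fin.cons θ (Fin.cons u s))) - projX (φ (Fin.cons u (Fin.cons θ s))) := by
  rw [contraction_apply, ← Fin.succ_zero_eq_one, Fin.insertNth_succ_cons, Fin.insertNth_zero']

theorem hD_contraction_cons (φ : Cochain (m + 2)) (u : V) (t : Fin (m + 1) → V) :
    hD mul3 (m + 1) (contraction φ) (Fin.cons u t) = φ (Fin.cons u t)
      - projθ (hD mul3 (m + 2) φ (Fin.cons θ (Fin.cons u t)))
      + projX (hD mul3 (m + 2) φ (Fin.cons u (Fin.cons θ t))) := by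
  simp only [hD_mul3_succ_cons, Fin.sum_univ_succ, Fin.cons_zero, Fin.castSucc_zero,
    Fin.removeNth_zero, Fin.tail_cons, ← Fin.succ_castSucc, Fin.cons_succ, Fin.removeNth_succ_cons,
    contraction_cons, contraction_apply_snd, map_add, map_sum, map_smul]
  simp only [projθ_apply, θ_snd, Fin.val_succ, Fin.val_zero, pow_succ, mul_neg, mul_one, neg_smul,
    one_smul, smul_sub, Finset.sum_neg_distrib, Finset.sum_sub_distrib]
  linear_combination (norm := module)
    projX_add_snd_smul_θ (φ (Fin.cons u t)) - (φ (Fin.cons θ t)).2 • projX_add_snd_smul_θ u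

theorem isCoboundary_of_isCocycle_succ (φ : Cochain (m + 2)) (hφ : IsCocycle mul3 φ) :
    IsCoboundary mul3 (m + 1) φ :=
  ⟨contraction φ, funext fun a => by
    rw [← Fin.cons_self_tail a, hD_contraction_cons, hφ, hφ, map_zero, map_zero, sub_zero,
      add_zero]⟩

end HigherDegree

end Mul3

/-- For the algebra `d₃` (`x² = 0`, `xθ = x`, `θx = 0`, `θ² = θ`), every
Hochschild `n`-cocycle with `n ≥ 1` is a coboundary; in particular
`H¹ = H² = 0` and the algebra is rigid. -/
theorem stmt9 :
    ∀ n : ℕ, ∀ φ : Cochain (n + 1),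
      IsCocycle mul3 φ → IsCoboundary mul3 n (⇑φ) := by
  rintro (_ | m) φ hφ
  · exact Mul3.isCoboundary_of_isCocycle_one φ hφ
  · exact Mul3.isCoboundary_of_isCocycle_succ φ hφ
end

section
/- For the unital algebra A on ℂ² = span{x, θ} with x² = 0, xθ = θx = x, θ² = θ, the second Hochschild cohomology H²(A,A) is 1-dimensional, spanned by the class of the 2-cochain φ with φ(x,x) = θ and φ vanishing on the other basis pairs. -/
/-- The 2-cochain with `φ(x,x) = θ` and `φ` vanishing on the other basis
pairs. -/
def phi11 (a b : V) : V := ((0 : ℂ), a.1 * b.1)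

/-! Since `θ` is the unit of `mul5`, the cocycle identity at `(x, θ, θ)` and `(θ, θ, x)` forces
`ψ(x, θ) = ψ(θ, x) = ψ(θ, θ)_θ · x` for every 2-cocycle `ψ`. Subtracting `ψ(x, x)_θ · φ` then leaves
the coboundary of the linear map `λ` with `λ(θ) = ψ(θ, θ)` and `λ(x) = ψ(x, x)_x / 2 · θ`.
On the other hand `δλ(x, x) = xλ(x) + λ(x)x` lies in `ℂx` for every `λ`, so `φ(x, x) = θ`
is not a coboundary. -/

theorem IsBilin.apply_eq {ψ : V → V → V} (hψ : IsBilin ψ) (a b : V) :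
    ψ a b = (a.1 * b.1) • ψ (1, 0) (1, 0) + (a.1 * b.2) • ψ (1, 0) (0, 1) +
      (a.2 * b.1) • ψ (0, 1) (1, 0) + (a.2 * b.2) • ψ (0, 1) (0, 1) := by
  obtain ⟨hadd₁, hsmul₁, hadd₂, hsmul₂⟩ := hψ
  have hbasis : ∀ v : V, v = v.1 • ((1, 0) : V) + v.2 • ((0, 1) : V) := fun v => by
    ext <;> simp
  conv_lhs => rw [hbasis a, hbasis b]
  rw [hadd₁, hsmul₁, hsmul₁, hadd₂, hadd₂, hsmul₂, hsmul₂, hsmul₂, hsmul₂]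
  module

theorem isCocycle2_mul5_phi11 : IsCocycle2 mul5 phi11 := by
  intro a b c
  ext <;> simp [mul5, phi11] <;> ring

theorem IsCoboundary2.snd_mul5_apply_x_x {φ : V → V → V} (hφ : IsCoboundary2 mul5 φ) :
    (φ (1, 0) (1, 0)).2 = 0 := by
  obtain ⟨l, hl⟩ := hφ
  have hxx : mul5 (1, 0) (1, 0) = 0 := by ext <;> simp [mul5]
  rw [hl, hxx, map_zero]
  simp [mul5]

theorem not_isCoboundary2_mul5_phi11 : ¬ IsCoboundary2 mul5 phi11 := fun h => by
  simpa [phi11] using h.snd_mul5_apply_x_x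

theorem IsCocycle2.mul5_apply_x_θ {ψ : V → V → V} (hψ : IsCocycle2 mul5 ψ) :
    ψ (1, 0) (0, 1) = ((ψ (0, 1) (0, 1)).2, 0) := by
  have h := hψ (1, 0) (0, 1) (0, 1)
  simp [mul5, Prod.ext_iff] at h
  ext
  · linear_combination -h.1
  · linear_combination h.2

theorem IsCocycle2.mul5_apply_θ_x {ψ : V → V → V} (hψ : IsCocycle2 mul5 ψ) :
    ψ (0, 1) (1, 0) = ((ψ (0, 1) (0, 1)).2, 0) := by
  have h := hψ (0, 1) (0, 1) (1, 0)
  simp [mul5, Prod.ext_iff] at h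
  ext
  · linear_combination h.1
  · linear_combination h.2

theorem IsCocycle2.isCoboundary2_mul5_sub_smul_phi11 {ψ : V → V → V} (hb : IsBilin ψ)
    (hψ : IsCocycle2 mul5 ψ) :
    IsCoboundary2 mul5 (fun a b => ψ a b - (ψ (1, 0) (1, 0)).2 • phi11 a b) := by
  refine ⟨(LinearMap.fst ℂ ℂ ℂ).smulRight ((0 : ℂ), (ψ (1, 0) (1, 0)).1 / 2) +
    (LinearMap.snd ℂ ℂ ℂ).smulRight (ψ (0, 1) (0, 1)), fun a b => ?_⟩
  dsimp only
  rw [hb.apply_eq a b, hψ.mul5_apply_x_θ, hψ.mul5_apply_θ_x]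
  ext <;> simp [mul5, phi11] <;> ring

/-- For the unital algebra `d₅` (`x² = 0`, `xθ = θx = x`, `θ² = θ`),
`H²(A,A)` is 1-dimensional, spanned by the class of `φ` with `φ(x,x) = θ`,
zero on other basis pairs. -/
theorem stmt11 :
    IsCocycle2 mul5 phi11 ∧ ¬ IsCoboundary2 mul5 phi11 ∧
      ∀ ψ : V → V → V, IsBilin ψ → IsCocycle2 mul5 ψ →
        ∃ c : ℂ, IsCoboundary2 mul5 (fun a b => ψ a b - c • phi11 a b) :=
  ⟨isCocycle2_mul5_phi11, not_isCoboundary2_mul5_phi11,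
    fun _ hb hψ => ⟨_, hψ.isCoboundary2_mul5_sub_smul_phi11 hb⟩⟩
end

section
/- For the algebra A on ℂ² = span{x, θ} with θ² = x and all other products zero, the two 2-cochains φ₁ and φ₂, where φ₁(θ,x) = φ₁(x,θ) = x, φ₁ = 0 otherwise, and φ₂(θ,x) = φ₂(x,θ) = θ, φ₂(x,x) = x, φ₂ = 0 otherwise, are Hochschild 2-cocycles whose cohomology classes are linearly independent in H²(A,A). -/
/-- `φ₁(θ,x) = φ₁(x,θ) = x`, zero otherwise on basis pairs. -/
def phi13a (a b : V) : V := (a.1 * b.2 + a.2 * b.1, 0)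

/-- `φ₂(θ,x) = φ₂(x,θ) = θ`, `φ₂(x,x) = x`, zero otherwise on basis pairs. -/
def phi13b (a b : V) : V := (a.1 * b.1, a.1 * b.2 + a.2 * b.1)

theorem isCocycle2_mul6_phi13a : IsCocycle2 mul6 phi13a := by
  intro a b c
  ext <;> simp only [mul6, phi13a, Prod.fst_sub, Prod.snd_sub, Prod.fst_add, Prod.snd_add,
    Prod.fst_zero, Prod.snd_zero] <;> ring

theorem isCocycle2_mul6_phi13b : IsCocycle2 mul6 phi13b := by
  intro a b c
  ext <;> simp only [mul6, phi13b, Prod.fst_sub, Prod.snd_sub, Prod.fst_add, Prod.snd_add,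
    Prod.fst_zero, Prod.snd_zero] <;> ring

/-- For `φ = δl` one finds `φ(x,θ) = ((l x).2, 0)` and `(φ(θ,θ)).2 = -(l x).2`. -/
theorem IsCoboundary2.mul6_apply_eq_zero {φ : V → V → V} (h : IsCoboundary2 mul6 φ) :
    (φ (1, 0) (0, 1)).2 = 0 ∧ (φ (1, 0) (0, 1)).1 + (φ (0, 1) (0, 1)).2 = 0 := by
  obtain ⟨l, hl⟩ := h
  simp [hl, mul6, Prod.mk_zero_zero]

/-- For the nilpotent algebra `d₆`, the 2-cochains `φ₁` and `φ₂` are Hochschild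
2-cocycles whose classes are linearly independent in `H²(A,A)`. -/
theorem stmt13 :
    IsCocycle2 mul6 phi13a ∧ IsCocycle2 mul6 phi13b ∧
      ∀ c₁ c₂ : ℂ,
        IsCoboundary2 mul6 (fun a b => c₁ • phi13a a b + c₂ • phi13b a b) →
          c₁ = 0 ∧ c₂ = 0 := by
  refine ⟨isCocycle2_mul6_phi13a, isCocycle2_mul6_phi13b, fun c₁ c₂ h => ?_⟩
  obtain ⟨h₂, h₁⟩ := h.mul6_apply_eq_zero
  simp only [phi13a, phi13b] at h₁ h₂
  exact ⟨by simpa using h₁, by simpa using h₂⟩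
end

section
/- The family of multiplications m_t on ℂ² = span{x, θ} defined by x·x = t·x, x·θ = θ·x = 0, θ·θ = θ is associative for every t ∈ ℂ, and for every t ≠ 0 the algebra (ℂ², m_t) is isomorphic to ℂ × ℂ. -/
/-- The deformed multiplication `m_t`: `x·x = t·x`, `x·θ = θ·x = 0`,
`θ·θ = θ`. -/
def mulT15 (t : ℂ) (a b : V) : V := (t * a.1 * b.1, a.2 * b.2)

theorem mulT15_assoc (t : ℂ) (a b c : V) :
    mulT15 t (mulT15 t a b) c = mulT15 t a (mulT15 t b c) := by
  simp only [mulT15, Prod.mk.injEq]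
  constructor <;> ring

/-- For `t ≠ 0` the elements `x / t` and `θ` are orthogonal idempotents of `(V, m_t)`;
this map sends them to the standard idempotents `(1, 0)` and `(0, 1)` of `ℂ × ℂ`. -/
noncomputable def scaleFst (t : ℂ) (ht : t ≠ 0) : V ≃ₗ[ℂ] ℂ × ℂ :=
  (LinearEquiv.smulOfNeZero ℂ ℂ t ht).prodCongr (LinearEquiv.refl ℂ ℂ)

@[simp]
theorem scaleFst_apply (t : ℂ) (ht : t ≠ 0) (a : V) : scaleFst t ht a = (t * a.1, a.2) :=
  rfl

theorem scaleFst_mulT15 (t : ℂ) (ht : t ≠ 0) (a b : V) :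
    scaleFst t ht (mulT15 t a b) = scaleFst t ht a * scaleFst t ht b := by
  simp only [scaleFst_apply, mulT15, Prod.mk_mul_mk, Prod.mk.injEq, and_true]
  ring

/-- The family `m_t` is associative for every `t`, and for `t ≠ 0` the algebra
`(ℂ², m_t)` is isomorphic to `ℂ × ℂ`. -/
theorem stmt15 :
    (∀ t : ℂ, ∀ a b c : V, mulT15 t (mulT15 t a b) c = mulT15 t a (mulT15 t b c)) ∧
    (∀ t : ℂ, t ≠ 0 →
      ∃ g : V ≃ₗ[ℂ] ℂ × ℂ, ∀ a b : V, g (mulT15 t a b) = g a * g b) :=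
  ⟨mulT15_assoc, fun t ht => ⟨scaleFst t ht, scaleFst_mulT15 t ht⟩⟩
end

section
/- The family of multiplications m_t on ℂ² = span{x, θ} defined by x·x = t·θ, x·θ = θ·x = x, θ·θ = θ is associative for every t ∈ ℂ, and for every t ≠ 0 the algebra (ℂ², m_t) is isomorphic to ℂ × ℂ. -/
/-- The deformed multiplication `m_t`: `x·x = t·θ`, `x·θ = θ·x = x`,
`θ·θ = θ`. -/
def mulT16 (t : ℂ) (a b : V) : V :=
  (a.1 * b.2 + a.2 * b.1, t * a.1 * b.1 + a.2 * b.2)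
/-!
Associativity is a polynomial identity in the coordinates. For `t = s²` with `s ≠ 0`, `θ` is the
unit of `m_t` and `e± = (θ ± s⁻¹ x) / 2` are orthogonal idempotents with `e₊ + e₋ = θ`; in the
basis `e₊, e₋` the multiplication is coordinatewise, i.e. `a ↦ (a₂ + s a₁, a₂ - s a₁)` is an
algebra isomorphism onto `ℂ × ℂ`.
-/

theorem mulT16_assoc (t : ℂ) (a b c : V) :
    mulT16 t (mulT16 t a b) c = mulT16 t a (mulT16 t b c) := by
  simp only [mulT16, Prod.ext_iff]
  constructor <;> ring

noncomputable def splitEquiv (s : ℂ) (hs : s ≠ 0) : V ≃ₗ[ℂ] ℂ × ℂ where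
  toFun a := (a.2 + s * a.1, a.2 - s * a.1)
  invFun b := ((b.1 - b.2) / (2 * s), (b.1 + b.2) / 2)
  map_add' a b := by
    simp only [Prod.fst_add, Prod.snd_add, Prod.mk_add_mk, Prod.ext_iff]
    constructor <;> ring
  map_smul' c a := by
    simp only [Prod.smul_fst, Prod.smul_snd, Prod.smul_mk, smul_eq_mul, RingHom.id_apply,
      Prod.ext_iff]
    constructor <;> ring
  left_inv a := by
    simp only [Prod.ext_iff]
    constructor <;> field_simp <;> ring
  right_inv b := by
    simp only [Prod.ext_iff]
    constructor <;> field_simp <;> ring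

theorem splitEquiv_apply (s : ℂ) (hs : s ≠ 0) (a : V) :
    splitEquiv s hs a = (a.2 + s * a.1, a.2 - s * a.1) :=
  rfl

theorem splitEquiv_mulT16 (s : ℂ) (hs : s ≠ 0) (a b : V) :
    splitEquiv s hs (mulT16 (s ^ 2) a b) = splitEquiv s hs a * splitEquiv s hs b := by
  simp only [splitEquiv_apply, mulT16, Prod.mk_mul_mk, Prod.ext_iff]
  constructor <;> ring

/-- The family `m_t` is associative for every `t`, and for `t ≠ 0` the algebra
`(ℂ², m_t)` is isomorphic to `ℂ × ℂ`. -/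
theorem stmt16 :
    (∀ t : ℂ, ∀ a b c : V, mulT16 t (mulT16 t a b) c = mulT16 t a (mulT16 t b c)) ∧
    (∀ t : ℂ, t ≠ 0 →
      ∃ g : V ≃ₗ[ℂ] ℂ × ℂ, ∀ a b : V, g (mulT16 t a b) = g a * g b) := by
  refine ⟨mulT16_assoc, fun t ht => ?_⟩
  obtain ⟨s, rfl⟩ := IsAlgClosed.exists_pow_nat_eq t two_pos
  have hs : s ≠ 0 := by
    rintro rfl
    exact ht (zero_pow two_ne_zero)
  exact ⟨splitEquiv s hs, splitEquiv_mulT16 s hs⟩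
end
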